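/- arXiv:math/0311211 — 2 statements merged into one kernel-verified Lean document; each statement's English description precedes it below -/
import Mathlib

section
/- The generating function F_{{231,321}}(x,q,z) satisfies the identity (1 − (x+1)z + (x−q)z²)·F_{{231,321}}(x,q,z) = 1 − z as formal power series in x, q, z over the integers. -/
open MvPowerSeries

/-- `π` contains the pattern `σ`: there is a strictly increasing choice of indices
on which the values of `π` are in the same relative order as the values of `σ`. -/
def PermContains {n m : ℕ} (π : Equiv.Perm (Fin n)) (σ : Equiv.Perm (Fin m)) : Prop :=
  ∃ f : Fin m → Fin n, (∀ i j : Fin m, i < j → f i < f j) ∧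
    ∀ i j : Fin m, σ i < σ j ↔ π (f i) < π (f j)

/-- `π` avoids the pattern `σ`. -/
def PermAvoids {n m : ℕ} (π : Equiv.Perm (Fin n)) (σ : Equiv.Perm (Fin m)) : Prop :=
  ¬ PermContains π σ

/-- Number of fixed points of `π`. -/
noncomputable def fpCount {n : ℕ} (π : Equiv.Perm (Fin n)) : ℕ :=
  Nat.card {i : Fin n // π i = i}

/-- Number of excedances of `π`. -/
noncomputable def excCount {n : ℕ} (π : Equiv.Perm (Fin n)) : ℕ :=
  Nat.card {i : Fin n // i < π i}

/-- The pattern 123. -/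
def p123 : Equiv.Perm (Fin 3) := 1
/-- The pattern 132. -/
def p132 : Equiv.Perm (Fin 3) := Equiv.swap 1 2
/-- The pattern 213. -/
def p213 : Equiv.Perm (Fin 3) := Equiv.swap 0 1
/-- The pattern 321. -/
def p321 : Equiv.Perm (Fin 3) := Equiv.swap 0 2
/-- The pattern 231 (0 ↦ 1, 1 ↦ 2, 2 ↦ 0). -/
def p231 : Equiv.Perm (Fin 3) := Equiv.swap 0 1 * Equiv.swap 1 2
/-- The pattern 312 (0 ↦ 2, 1 ↦ 0, 2 ↦ 1). -/
def p312 : Equiv.Perm (Fin 3) := Equiv.swap 1 2 * Equiv.swap 0 1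

/-- The generating function `F_Σ(x,q,z) = Σ_{n≥0} Σ_{π ∈ S_n(Σ)} x^{fp π} q^{exc π} z^n`
as a multivariate formal power series over ℤ in variables `X 0 = x`, `X 1 = q`, `X 2 = z`:
the coefficient of `x^i q^j z^n` is the number of permutations of length `n` avoiding all
patterns of `Σ` with exactly `i` fixed points and `j` excedances. -/
noncomputable def patternGF (pats : Set (Equiv.Perm (Fin 3))) : MvPowerSeries (Fin 3) ℤ :=
  fun d => (Nat.card {π : Equiv.Perm (Fin (d 2)) //
    (∀ σ ∈ pats, PermAvoids π σ) ∧ fpCount π = d 0 ∧ excCount π = d 1} : ℤ)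

/-- The variable `x` (marking fixed points). -/
noncomputable def vx : MvPowerSeries (Fin 3) ℤ := X 0
/-- The variable `q` (marking excedances). -/
noncomputable def vq : MvPowerSeries (Fin 3) ℤ := X 1
/-- The variable `z` (marking the length). -/
noncomputable def vz : MvPowerSeries (Fin 3) ℤ := X 2

/-!
A permutation avoids 231 and 321 iff no entry has two larger entries to its left, which by
counting happens iff `π k ≥ k - 1` for every position `k`. Such permutations are peeled off
with `Equiv.Perm.decomposeFin`, which splits `π` of length `n + 1` into `p = π 0` and a
permutation `τ` of length `n`: the condition forces `p = 0` (a fixed point in front of an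
arbitrary `τ`) or `p = τ 0 + 1`, and in the second case the statistics of `π` and `τ` agree
unless `τ 0 = 0`, when a fixed point of `τ` becomes an excedance of `π`. Writing `D` for the
series of those with `π 0 ≠ 0`, this gives `F = 1 + x z F + D` and `D = q z² F + z D`;
eliminating `D` gives the identity.
-/

open Equiv Finset

def DropAtMostOne {n : ℕ} (π : Perm (Fin n)) : Prop :=
  ∀ k : Fin n, (k : ℕ) ≤ π k + 1

section Avoidance

variable {n : ℕ} (π : Perm (Fin n))

lemma card_smaller_add_card_larger (k : Fin n) :
    #{m | m < k ∧ π m < π k} + #{m | m < k ∧ π k < π m} = k := by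
  rw [← card_union_of_disjoint (disjoint_filter.mpr fun m _ h h' => lt_asymm h.2 h'.2)]
  convert Fin.card_Iio k using 2
  ext m
  simp only [mem_union, mem_filter, mem_univ, true_and, mem_Iio]
  refine ⟨fun h => h.elim And.left And.left, fun h => ?_⟩
  rcases lt_trichotomy (π m) (π k) with h' | h' | h'
  · exact .inl ⟨h, h'⟩
  · exact absurd (π.injective h') h.ne
  · exact .inr ⟨h, h'⟩

lemma card_smaller_le (k : Fin n) : #{m | m < k ∧ π m < π k} ≤ π k :=
  calc #{m | m < k ∧ π m < π k} ≤ #(Iio (π k)) :=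
        card_le_card_of_injOn π (fun m hm => by simp_all) π.injective.injOn
    _ = π k := Fin.card_Iio _

variable {π}

lemma DropAtMostOne.sub_one_le_card_smaller (hπ : DropAtMostOne π) (k : Fin n) :
    (k : ℕ) - 1 ≤ #{m | m < k ∧ π m < π k} :=
  calc (k : ℕ) - 1 = #{v : Fin n | (v : ℕ) < k - 1} := by
        rw [Fin.card_filter_val_lt]; omega
    _ ≤ #{m | m < k ∧ π m < π k} := by
      -- a value `v < k - 1` sits at a position `≤ v + 1 < k`, and `v < k - 1 ≤ π k`
      refine card_le_card_of_injOn π.symm (fun v hv => ?_) π.symm.injective.injOn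
      have hv' := hπ (π.symm v)
      have hk := hπ k
      simp only [coe_filter, Set.mem_ofPred_eq, mem_univ, true_and, apply_symm_apply,
        Fin.lt_def] at hv hv' ⊢
      omega

lemma dropAtMostOne_iff_card_larger_le_one :
    DropAtMostOne π ↔ ∀ k, #{m | m < k ∧ π k < π m} ≤ 1 := by
  refine ⟨fun hπ k => ?_, fun h k => ?_⟩
  · have := card_smaller_add_card_larger π k
    have := hπ.sub_one_le_card_smaller k
    omega
  · have := card_smaller_add_card_larger π k
    have := card_smaller_le π k
    have := h k
    omega

lemma permContains_of_three {σ : Perm (Fin 3)} {a b c : Fin n} (hab : a < b) (hbc : b < c)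
    (h : ∀ i j : Fin 3, σ i < σ j ↔ π (![a, b, c] i) < π (![a, b, c] j)) :
    PermContains π σ := by
  refine ⟨![a, b, c], fun i j hij => ?_, h⟩
  fin_cases i <;> fin_cases j <;> simp at hij ⊢ <;> order

lemma exists_one_lt_card_larger_of_permContains {σ : Perm (Fin 3)} (h : PermContains π σ)
    (h0 : σ 2 < σ 0) (h1 : σ 2 < σ 1) : ∃ k, 1 < #{m | m < k ∧ π k < π m} := by
  obtain ⟨f, hf, hσ⟩ := h
  refine ⟨f 2, one_lt_card.mpr ⟨f 0, ?_, f 1, ?_, (hf 0 1 (by decide)).ne⟩⟩ <;>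
    simp only [mem_filter, mem_univ, true_and]
  · exact ⟨hf 0 2 (by decide), (hσ 2 0).mp h0⟩
  · exact ⟨hf 1 2 (by decide), (hσ 2 1).mp h1⟩

lemma permContains_231_or_321_iff :
    PermContains π p231 ∨ PermContains π p321 ↔ ∃ k, 1 < #{m | m < k ∧ π k < π m} := by
  refine ⟨fun h => h.elim (exists_one_lt_card_larger_of_permContains · (by decide) (by decide))
    (exists_one_lt_card_larger_of_permContains · (by decide) (by decide)), ?_⟩
  rintro ⟨c, hc⟩
  obtain ⟨a, ha, b, hb, hab⟩ := one_lt_card.mp hc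
  simp only [mem_filter, mem_univ, true_and] at ha hb
  wlog hlt : a < b generalizing a b
  · exact this b a hab.symm hb ha (lt_of_le_of_ne (not_lt.mp hlt) hab.symm)
  rcases lt_or_gt_of_ne (π.injective.ne hab) with h | h
  · refine .inl (permContains_of_three hlt hb.1 fun i j => ?_)
    fin_cases i <;> fin_cases j <;> simp [p231, swap_apply_of_ne_of_ne] <;> order
  · refine .inr (permContains_of_three hlt hb.1 fun i j => ?_)
    fin_cases i <;> fin_cases j <;> simp [p321, swap_apply_of_ne_of_ne] <;> order

theorem avoids_231_321_iff_dropAtMostOne :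
    (∀ σ ∈ ({p231, p321} : Set (Perm (Fin 3))), PermAvoids π σ) ↔ DropAtMostOne π := by
  simp only [Set.mem_insert_iff, Set.mem_singleton_iff, forall_eq_or_imp, forall_eq, PermAvoids,
    ← not_or, permContains_231_or_321_iff, dropAtMostOne_iff_card_larger_le_one, not_exists,
    not_lt]

end Avoidance

section GeneratingFunction

variable (P Q : ∀ n, Perm (Fin n) → Prop)

noncomputable def permCount (i j n : ℕ) : ℕ :=
  Nat.card {π : Perm (Fin n) // P n π ∧ fpCount π = i ∧ excCount π = j}

noncomputable def permGF : MvPowerSeries (Fin 3) ℤ := fun d => permCount P (d 0) (d 1) (d 2)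

lemma coeff_permGF (d : Fin 3 →₀ ℕ) : coeff d (permGF P) = permCount P (d 0) (d 1) (d 2) := rfl

lemma patternGF_eq_permGF (pats : Set (Perm (Fin 3))) :
    patternGF pats = permGF fun _ π => ∀ σ ∈ pats, PermAvoids π σ := rfl

variable {P Q}

lemma permGF_congr (h : ∀ n π, P n π ↔ Q n π) : permGF P = permGF Q :=
  congrArg permGF (funext₂ fun n π => propext (h n π))

lemma permGF_or (h : ∀ n π, P n π → ¬ Q n π) :
    permGF (fun n π => P n π ∨ Q n π) = permGF P + permGF Q := by
  classical
  ext d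
  simp only [map_add, coeff_permGF, permCount, Nat.card_eq_fintype_card, Fintype.card_subtype,
    or_and_right, filter_or]
  rw [card_union_of_disjoint (disjoint_filter.mpr fun π _ hP hQ => h _ π hP.1 hQ.1)]
  push_cast
  rfl

lemma permCount_length_eq_zero (i j n : ℕ) :
    permCount (fun n _ => n = 0) i j n = if i = 0 ∧ j = 0 ∧ n = 0 then 1 else 0 := by
  rcases n with _ | n
  · by_cases h : i = 0 ∧ j = 0 <;> simp [permCount, fpCount, excCount, eq_comm, h]
  · simp [permCount]

lemma permGF_length_eq_zero : permGF (fun n _ => n = 0) = 1 := by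
  ext d
  rw [coeff_permGF, permCount_length_eq_zero, coeff_one]
  simp [Finsupp.ext_iff, Fin.forall_fin_succ]

variable {a b c : ℕ}

lemma permCount_add_of_bijOn {n : ℕ} {g : Perm (Fin (n + c)) → Perm (Fin n)}
    (hg : Set.BijOn g {π | P _ π} {τ | Q n τ})
    (hfp : ∀ π, P _ π → fpCount π = fpCount (g π) + a)
    (hexc : ∀ π, P _ π → excCount π = excCount (g π) + b) (i j : ℕ) :
    permCount P (i + a) (j + b) (n + c) = permCount Q i j n := by
  refine Nat.card_congr (Set.BijOn.equiv g ⟨?_, hg.injOn.mono fun π h => h.1, ?_⟩)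
  · rintro π ⟨hP, hπfp, hπexc⟩
    exact ⟨hg.mapsTo hP, by linarith [hfp π hP], by linarith [hexc π hP]⟩
  · rintro τ ⟨hQ, hτfp, hτexc⟩
    obtain ⟨π, hP, rfl⟩ := hg.surjOn hQ
    exact ⟨π, ⟨hP, by rw [hfp π hP, hτfp], by rw [hexc π hP, hτexc]⟩, rfl⟩

lemma permCount_eq_zero_of_lt (h : ∀ n π, P n π → a ≤ fpCount π ∧ b ≤ excCount π ∧ c ≤ n)
    {i j n : ℕ} (hijn : i < a ∨ j < b ∨ n < c) : permCount P i j n = 0 := by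
  refine Nat.card_eq_zero.mpr (.inl ⟨fun ⟨π, hP, hπfp, hπexc⟩ => ?_⟩)
  have := h n π hP
  omega

lemma vx_pow_mul_vq_pow_mul_vz_pow (a b c : ℕ) : vx ^ a * vq ^ b * vz ^ c =
    monomial (Finsupp.single 0 a + Finsupp.single 1 b + Finsupp.single 2 c) 1 := by
  simp only [vx, vq, vz, X_pow_eq, monomial_mul_monomial, one_mul]

theorem permGF_eq_mul_of_bijOn {g : ∀ n, Perm (Fin (n + c)) → Perm (Fin n)}
    (hg : ∀ n, Set.BijOn (g n) {π | P _ π} {τ | Q n τ})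
    (hfp : ∀ n π, P (n + c) π → fpCount π = fpCount (g n π) + a)
    (hexc : ∀ n π, P (n + c) π → excCount π = excCount (g n π) + b)
    (hshort : ∀ n < c, ∀ π, ¬ P n π) :
    permGF P = vx ^ a * vq ^ b * vz ^ c * permGF Q := by
  have hbound (n : ℕ) (π : Perm (Fin n)) (hP : P n π) :
      a ≤ fpCount π ∧ b ≤ excCount π ∧ c ≤ n := by
    by_cases hn : n < c
    · exact (hshort n hn π hP).elim
    obtain ⟨m, rfl⟩ : ∃ m, n = m + c := ⟨n - c, by omega⟩
    exact ⟨by simp [hfp m π hP], by simp [hexc m π hP], by omega⟩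
  ext d
  rw [vx_pow_mul_vq_pow_mul_vz_pow, coeff_monomial_mul, coeff_permGF]
  split_ifs with hd <;> simp only [Finsupp.le_def, Fin.forall_fin_succ] at hd <;>
    simp at hd
  · have := permCount_add_of_bijOn (hg (d 2 - c)) (hfp _) (hexc _) (d 0 - a) (d 1 - b)
    rw [one_mul, coeff_permGF]
    simp [← this, Nat.sub_add_cancel, hd]
  · rw [permCount_eq_zero_of_lt hbound (by omega), Nat.cast_zero]

end GeneratingFunction

section Decomposition

open Perm

variable {n : ℕ}

lemma natCard_subtype_fin_succ (R : Fin (n + 1) → Prop) [DecidablePred R] :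
    Nat.card {i // R i} = (if R 0 then 1 else 0) + Nat.card {x : Fin n // R x.succ} := by
  simp only [Nat.card_eq_fintype_card, Fintype.card_subtype, Fin.card_filter_univ_succ']

lemma decomposeFin_symm_apply_zero_snd (π : Perm (Fin (n + 1))) :
    decomposeFin.symm (π 0, (decomposeFin π).2) = π := by
  rw [Equiv.symm_apply_eq]
  refine Prod.ext ?_ rfl
  conv_lhs => rw [← decomposeFin.symm_apply_apply π]
  exact decomposeFin_symm_apply_zero _ _

lemma bijOn_decomposeFin_snd {P : Perm (Fin (n + 1)) → Prop} {Q : Perm (Fin n) → Prop}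
    (φ : Perm (Fin n) → Fin (n + 1)) (h : ∀ p τ, P (decomposeFin.symm (p, τ)) ↔ Q τ ∧ p = φ τ) :
    Set.BijOn (fun π => (decomposeFin π).2) {π | P π} {τ | Q τ} := by
  have hP (π) : P π ↔ Q (decomposeFin π).2 ∧ (decomposeFin π).1 = φ (decomposeFin π).2 := by
    rw [← h, Prod.mk.eta, symm_apply_apply]
  refine ⟨fun π hπ => ((hP π).1 hπ).1, fun π hπ π' hπ' heq => ?_, fun τ hτ => ?_⟩
  · refine decomposeFin.injective (Prod.ext ?_ heq)
    rw [((hP π).1 hπ).2, ((hP π').1 hπ').2]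
    exact congrArg φ heq
  · exact ⟨decomposeFin.symm (φ τ, τ), (h _ _).2 ⟨hτ, rfl⟩, by simp⟩

section Zero

variable (τ : Perm (Fin n))

lemma dropAtMostOne_decomposeFin_symm_zero :
    DropAtMostOne (decomposeFin.symm (0, τ)) ↔ DropAtMostOne τ := by
  simp [DropAtMostOne, Fin.forall_fin_succ]

lemma fpCount_decomposeFin_symm_zero : fpCount (decomposeFin.symm (0, τ)) = fpCount τ + 1 := by
  rw [fpCount, fpCount, natCard_subtype_fin_succ]
  simp [add_comm]

lemma excCount_decomposeFin_symm_zero : excCount (decomposeFin.symm (0, τ)) = excCount τ := by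
  rw [excCount, excCount, natCard_subtype_fin_succ]
  simp

end Zero

section Head

variable (τ : Perm (Fin (n + 1)))

lemma decomposeFin_symm_head_apply_succ_succ (x : Fin n) :
    decomposeFin.symm ((τ 0).succ, τ) x.succ.succ = (τ x.succ).succ := by
  rw [decomposeFin_symm_apply_succ, swap_apply_of_ne_of_ne (Fin.succ_ne_zero _)]
  simp [Fin.succ_ne_zero]

lemma fpCount_decomposeFin_symm_head :
    fpCount (decomposeFin.symm ((τ 0).succ, τ)) + (if (τ 0 : ℕ) = 0 then 1 else 0) =
      fpCount τ := by
  simp only [fpCount, natCard_subtype_fin_succ, decomposeFin_symm_head_apply_succ_succ]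
  simp [add_comm]

lemma excCount_decomposeFin_symm_head :
    excCount (decomposeFin.symm ((τ 0).succ, τ)) =
      excCount τ + (if (τ 0 : ℕ) = 0 then 1 else 0) := by
  simp only [excCount, natCard_subtype_fin_succ, decomposeFin_symm_head_apply_succ_succ]
  by_cases h : τ 0 = 0 <;> simp [h, Fin.pos_iff_ne_zero, add_comm]

end Head

lemma dropAtMostOne_decomposeFin_symm_iff {p : Fin (n + 2)} (hp : p ≠ 0)
    {τ : Perm (Fin (n + 1))} :
    DropAtMostOne (decomposeFin.symm (p, τ)) ↔ DropAtMostOne τ ∧ p = (τ 0).succ := by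
  constructor
  · intro h
    obtain ⟨q, rfl⟩ := Fin.exists_succ_eq.mpr hp
    -- the entry 0 of the permutation sits at position `τ⁻¹ q + 1`, which must be at most 1
    have hhead : τ 0 = q := by
      have hy := h (τ.symm q).succ
      rw [decomposeFin_symm_apply_succ, apply_symm_apply, swap_apply_right] at hy
      have : τ.symm q = 0 := Fin.ext (by simp at hy; omega)
      rw [← this, apply_symm_apply]
    subst hhead
    refine ⟨Fin.cases (by simp) fun x => ?_, rfl⟩
    have hx := h x.succ.succ
    rw [decomposeFin_symm_head_apply_succ_succ] at hx
    simpa using hx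
  · rintro ⟨hτ, rfl⟩
    refine Fin.cases (by simp) (Fin.cases (by simp) fun x => ?_)
    have hx := hτ x.succ
    rw [decomposeFin_symm_head_apply_succ_succ]
    simpa using hx

section ApplyZeroEqZero

variable {π : Perm (Fin (n + 1))}

lemma decomposeFin_symm_zero_eq (h0 : (π 0 : ℕ) = 0) :
    decomposeFin.symm (0, (decomposeFin π).2) = π := by
  conv_rhs => rw [← decomposeFin_symm_apply_zero_snd π, Fin.ext (b := 0) h0]

lemma fpCount_of_apply_zero_eq_zero (h0 : (π 0 : ℕ) = 0) :
    fpCount π = fpCount (decomposeFin π).2 + 1 := by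
  rw [← fpCount_decomposeFin_symm_zero, decomposeFin_symm_zero_eq h0]

lemma excCount_of_apply_zero_eq_zero (h0 : (π 0 : ℕ) = 0) :
    excCount π = excCount (decomposeFin π).2 := by
  rw [← excCount_decomposeFin_symm_zero (decomposeFin π).2, decomposeFin_symm_zero_eq h0]

end ApplyZeroEqZero

namespace DropAtMostOne

variable {π : Perm (Fin (n + 2))}

lemma decomposeFin_symm_head_eq (hπ : DropAtMostOne π) (h0 : 0 < (π 0 : ℕ)) :
    decomposeFin.symm (((decomposeFin π).2 0).succ, (decomposeFin π).2) = π := by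
  have hπ' := decomposeFin_symm_apply_zero_snd π
  rw [← hπ', dropAtMostOne_decomposeFin_symm_iff (Fin.ne_of_val_ne h0.ne')] at hπ
  rw [← hπ.2, hπ']

lemma val_apply_zero (hπ : DropAtMostOne π) (h0 : 0 < (π 0 : ℕ)) :
    (π 0 : ℕ) = (decomposeFin π).2 0 + 1 := by
  rw [← hπ.decomposeFin_symm_head_eq h0, decomposeFin_symm_apply_zero, Fin.val_succ]
  simp

lemma fpCount_of_apply_zero_pos (hπ : DropAtMostOne π) (h0 : 0 < (π 0 : ℕ)) :
    fpCount π + (if ((decomposeFin π).2 0 : ℕ) = 0 then 1 else 0) =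
      fpCount (decomposeFin π).2 := by
  rw [← fpCount_decomposeFin_symm_head (decomposeFin π).2, hπ.decomposeFin_symm_head_eq h0]

lemma excCount_of_apply_zero_pos (hπ : DropAtMostOne π) (h0 : 0 < (π 0 : ℕ)) :
    excCount π =
      excCount (decomposeFin π).2 + (if ((decomposeFin π).2 0 : ℕ) = 0 then 1 else 0) := by
  rw [← excCount_decomposeFin_symm_head (decomposeFin π).2, hπ.decomposeFin_symm_head_eq h0]

end DropAtMostOne

end Decomposition

section Classes

open Perm

def HeadIn (R : ℕ → Prop) : ∀ {n}, Perm (Fin n) → Prop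
  | 0, _ => False
  | _ + 1, π => R (π 0)

lemma headIn_succ {R : ℕ → Prop} {n : ℕ} {π : Perm (Fin (n + 1))} : HeadIn R π ↔ R (π 0) :=
  Iff.rfl

lemma bijOn_headZero (n : ℕ) :
    Set.BijOn (fun π => (decomposeFin π).2)
      {π : Perm (Fin (n + 1)) | DropAtMostOne π ∧ HeadIn (· = 0) π} {τ | DropAtMostOne τ} := by
  refine bijOn_decomposeFin_snd (fun _ => 0) fun p τ => ?_
  rw [headIn_succ, decomposeFin_symm_apply_zero, Fin.val_eq_zero_iff]
  exact ⟨fun ⟨h, hp⟩ => ⟨(dropAtMostOne_decomposeFin_symm_zero τ).1 (hp ▸ h), hp⟩,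
    fun ⟨h, hp⟩ => ⟨hp ▸ (dropAtMostOne_decomposeFin_symm_zero τ).2 h, hp⟩⟩

lemma permGF_headZero :
    permGF (fun _ π => DropAtMostOne π ∧ HeadIn (· = 0) π) =
      vx * vz * permGF fun _ π => DropAtMostOne π := by
  refine (permGF_eq_mul_of_bijOn (a := 1) (b := 0) (c := 1) bijOn_headZero
    (fun n π hπ => fpCount_of_apply_zero_eq_zero hπ.2)
    (fun n π hπ => excCount_of_apply_zero_eq_zero hπ.2) fun n hn π hπ => ?_).trans (by ring)
  obtain rfl : n = 0 := by omega
  exact hπ.2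

lemma bijOn_headOne (n : ℕ) :
    Set.BijOn (fun π => (decomposeFin π).2)
      {π : Perm (Fin (n + 2)) | DropAtMostOne π ∧ HeadIn (· = 1) π}
      {σ | DropAtMostOne σ ∧ HeadIn (· = 0) σ} := by
  refine bijOn_decomposeFin_snd (fun _ => 1) fun p σ => ?_
  rw [headIn_succ, headIn_succ, decomposeFin_symm_apply_zero]
  constructor
  · rintro ⟨h, hp⟩
    obtain rfl : p = 1 := Fin.ext (by rw [hp, Fin.val_one])
    obtain ⟨hσ, h1⟩ := (dropAtMostOne_decomposeFin_symm_iff one_ne_zero).1 h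
    rw [Fin.ext_iff, Fin.val_one, Fin.val_succ] at h1
    exact ⟨⟨hσ, by omega⟩, rfl⟩
  · rintro ⟨⟨hσ, h0⟩, rfl⟩
    refine ⟨(dropAtMostOne_decomposeFin_symm_iff one_ne_zero).2 ⟨hσ, ?_⟩, Fin.val_one _⟩
    rw [Fin.ext_iff, Fin.val_one, Fin.val_succ, h0]

lemma permGF_headOne :
    permGF (fun _ π => DropAtMostOne π ∧ HeadIn (· = 1) π) =
      vq * vz ^ 2 * permGF fun _ π => DropAtMostOne π := by
  have hweights (n : ℕ) (π : Perm (Fin (n + 2))) (hπ : DropAtMostOne π ∧ HeadIn (· = 1) π) :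
      fpCount π = fpCount (decomposeFin (decomposeFin π).2).2 ∧
        excCount π = excCount (decomposeFin (decomposeFin π).2).2 + 1 := by
    obtain ⟨hπ, hπ0 : (π 0 : ℕ) = 1⟩ := hπ
    have hσ0 : ((decomposeFin π).2 0 : ℕ) = 0 := by
      have := hπ.val_apply_zero (by omega)
      omega
    have hfp := hπ.fpCount_of_apply_zero_pos (by omega)
    have hexc := hπ.excCount_of_apply_zero_pos (by omega)
    rw [if_pos hσ0, fpCount_of_apply_zero_eq_zero hσ0] at hfp
    rw [if_pos hσ0, excCount_of_apply_zero_eq_zero hσ0] at hexc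
    omega
  refine (permGF_eq_mul_of_bijOn (a := 0) (b := 1) (c := 2) (fun n => (bijOn_headZero n).comp
    (bijOn_headOne n)) (fun n π hπ => (hweights n π hπ).1) (fun n π hπ => (hweights n π hπ).2)
    fun n hn π hπ => ?_).trans (by ring)
  rcases n with _ | _ | n
  · exact hπ.2
  · have := (π 0).isLt
    rw [headIn_succ] at hπ
    omega
  · omega

lemma bijOn_headGtOne (n : ℕ) :
    Set.BijOn (fun π => (decomposeFin π).2)
      {π : Perm (Fin (n + 2)) | DropAtMostOne π ∧ HeadIn (1 < ·) π}
      {τ | DropAtMostOne τ ∧ HeadIn (0 < ·) τ} := by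
  refine bijOn_decomposeFin_snd (fun τ => (τ 0).succ) fun p τ => ?_
  rw [headIn_succ, headIn_succ, decomposeFin_symm_apply_zero]
  constructor
  · rintro ⟨h, hp⟩
    obtain ⟨hτ, rfl⟩ := (dropAtMostOne_decomposeFin_symm_iff
      (Fin.ne_of_val_ne (by rw [Fin.val_zero]; omega))).1 h
    rw [Fin.val_succ] at hp
    exact ⟨⟨hτ, by omega⟩, rfl⟩
  · rintro ⟨⟨hτ, h0⟩, rfl⟩
    refine ⟨(dropAtMostOne_decomposeFin_symm_iff (Fin.succ_ne_zero _)).2 ⟨hτ, rfl⟩, ?_⟩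
    rw [Fin.val_succ]
    omega

lemma permGF_headGtOne :
    permGF (fun _ π => DropAtMostOne π ∧ HeadIn (1 < ·) π) =
      vz * permGF fun _ π => DropAtMostOne π ∧ HeadIn (0 < ·) π := by
  have hone (π : Perm (Fin 1)) : ¬ HeadIn (1 < ·) π := by
    have := (π 0).isLt
    rw [headIn_succ]
    omega
  have hweights (n : ℕ) (π : Perm (Fin (n + 2))) (hπ : DropAtMostOne π ∧ HeadIn (1 < ·) π) :
      fpCount π = fpCount (decomposeFin π).2 ∧ excCount π = excCount (decomposeFin π).2 := by
    obtain ⟨hπ, hπ0 : 1 < (π 0 : ℕ)⟩ := hπ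
    have hτ0 : ((decomposeFin π).2 0 : ℕ) ≠ 0 := by
      have := hπ.val_apply_zero (by omega)
      omega
    exact ⟨by simpa [hτ0] using hπ.fpCount_of_apply_zero_pos (by omega),
      by simpa [hτ0] using hπ.excCount_of_apply_zero_pos (by omega)⟩
  refine (permGF_eq_mul_of_bijOn (a := 0) (b := 0) (c := 1) (g := fun _ π => (decomposeFin π).2)
    (fun n => ?_) (fun n π hπ => ?_) (fun n π hπ => ?_) fun n hn π hπ => ?_).trans (by ring)
  · rcases n with _ | n
    · exact ⟨fun π hπ => (hone π hπ.2).elim, fun π hπ => (hone π hπ.2).elim, fun τ hτ => hτ.2.elim⟩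
    · exact bijOn_headGtOne n
  · rcases n with _ | n
    · exact (hone π hπ.2).elim
    · exact (hweights n π hπ).1
  · rcases n with _ | n
    · exact (hone π hπ.2).elim
    · exact (hweights n π hπ).2
  · obtain rfl : n = 0 := by omega
    exact hπ.2

lemma permGF_dropAtMostOne :
    permGF (fun _ π => DropAtMostOne π) =
      1 + vx * vz * permGF (fun _ π => DropAtMostOne π) +
        permGF fun _ π => DropAtMostOne π ∧ HeadIn (0 < ·) π := by
  rw [← permGF_headZero, ← permGF_length_eq_zero, ← permGF_or, ← permGF_or]
  · refine permGF_congr fun n π => ?_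
    rcases n with _ | n
    · simp [DropAtMostOne, HeadIn]
    · simp only [headIn_succ, Nat.add_one_ne_zero, false_or, ← and_or_left, iff_self_and]
      exact fun _ => Nat.eq_zero_or_pos _
  · rintro (_ | n) π h
    · simp [HeadIn]
    · simp only [headIn_succ, Nat.add_one_ne_zero, false_or] at h ⊢
      omega
  · rintro (_ | n) π h
    · simp [HeadIn]
    · simp at h

lemma permGF_headPos :
    permGF (fun _ π => DropAtMostOne π ∧ HeadIn (0 < ·) π) =
      vq * vz ^ 2 * permGF (fun _ π => DropAtMostOne π) +
        vz * permGF fun _ π => DropAtMostOne π ∧ HeadIn (0 < ·) π := by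
  rw [← permGF_headOne, ← permGF_headGtOne, ← permGF_or]
  · refine permGF_congr fun n π => ?_
    rcases n with _ | n
    · simp [HeadIn]
    · simp only [headIn_succ, ← and_or_left]
      exact and_congr_right fun _ => by omega
  · rintro (_ | n) π h
    · simp [HeadIn] at h
    · simp only [headIn_succ] at h ⊢
      omega

end Classes

/-- (1 − (x+1)z + (x−q)z²)·F_{{231,321}}(x,q,z) = 1 − z. -/
theorem F231_321_identity :
    (1 - (vx + 1) * vz + (vx - vq) * vz ^ 2) * patternGF {p231, p321} =
      1 - vz := by
  rw [patternGF_eq_permGF, permGF_congr fun _ _ => avoids_231_321_iff_dropAtMostOne]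
  linear_combination (1 - vz) * permGF_dropAtMostOne + permGF_headPos
end

section
/- The generating function F_{{231,312,321}}(x,q,z) satisfies the identity (1 − xz − qz²)·F_{{231,312,321}}(x,q,z) = 1 as formal power series in x, q, z over the integers; that is, F_{{231,312,321}}(x,q,z) = 1/(1 − xz − qz²). -/
open MvPowerSeries

/-!
Avoiding 312 and 321 leaves at most one smaller value to the right of any position, and
avoiding 231 and 321 at most one larger value to its left; counting the values below `π i`
then gives `|π i - i| ≤ 1`. Conversely such a permutation has no inversion between positions
two apart, so it avoids all three patterns. A permutation moving every point by at most one
is an involution (a pigeonhole argument), hence a product of disjoint adjacent transpositions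
`(a a+1)`, and it is determined by its excedance set, a set of positions with no two consecutive.
With `j` transpositions it has `n - 2j` fixed points and `j` excedances, and deleting or adding
the last position shows that there are `C(i+j, j)` such sets when `n = i + 2j`. Thus
`F = Σ C(i+j, j) (xz)^i (qz²)^j = 1 / (1 - xz - qz²)`, coefficientwise Pascal's rule.
-/

open Finset

section Patterns

variable {n m : ℕ}

theorem permContains_of_strictMono (π : Equiv.Perm (Fin n)) (σ : Equiv.Perm (Fin m))
    {f : Fin m → Fin n} (hf : StrictMono f) (hπ : StrictMono (π ∘ f ∘ σ.symm)) :
    PermContains π σ :=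
  ⟨f, fun _ _ h => hf h, fun i j => by simpa using (hπ.lt_iff_lt (a := σ i) (b := σ j)).symm⟩

theorem permContains_of_lt_of_lt (π : Equiv.Perm (Fin n)) (σ : Equiv.Perm (Fin 3))
    {a b c : Fin n} (hab : a < b) (hbc : b < c)
    (h₁ : π (![a, b, c] (σ.symm 0)) < π (![a, b, c] (σ.symm 1)))
    (h₂ : π (![a, b, c] (σ.symm 1)) < π (![a, b, c] (σ.symm 2))) :
    PermContains π σ := by
  refine permContains_of_strictMono π σ (f := ![a, b, c]) ?_ ?_ <;>
    · rw [Fin.strictMono_iff_lt_succ]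
      intro i
      fin_cases i <;> simpa

theorem card_filter_apply_lt (π : Equiv.Perm (Fin n)) (v : Fin n) :
    #{k | π k < v} = v := by
  rw [← Fin.card_Iio v]
  exact card_nbij' π π.symm (fun k hk => by simpa using hk) (fun k hk => by simpa using hk)
    (fun k _ => by simp) (fun k _ => by simp)

variable {π : Equiv.Perm (Fin n)} {a b c : Fin n}

theorem permContains_p231 (hab : a < b) (hbc : b < c) (h₁ : π c < π a) (h₂ : π a < π b) :
    PermContains π p231 :=
  permContains_of_lt_of_lt π p231 hab hbc (by simpa [p231, Equiv.swap_apply_of_ne_of_ne])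
    (by simpa [p231, Equiv.swap_apply_of_ne_of_ne])

theorem permContains_p312 (hab : a < b) (hbc : b < c) (h₁ : π b < π c) (h₂ : π c < π a) :
    PermContains π p312 :=
  permContains_of_lt_of_lt π p312 hab hbc (by simpa [p312, Equiv.swap_apply_of_ne_of_ne])
    (by simpa [p312, Equiv.swap_apply_of_ne_of_ne])

theorem permContains_p321 (hab : a < b) (hbc : b < c) (h₁ : π c < π b) (h₂ : π b < π a) :
    PermContains π p321 :=
  permContains_of_lt_of_lt π p321 hab hbc (by simpa [p321, Equiv.swap_apply_of_ne_of_ne])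
    (by simpa [p321, Equiv.swap_apply_of_ne_of_ne])

theorem card_filter_lt_and_apply_lt_le_one (h312 : PermAvoids π p312)
    (h321 : PermAvoids π p321) (i : Fin n) : #{k | i < k ∧ π k < π i} ≤ 1 := by
  have two_below (a b : Fin n) (hia : i < a) (hab : a < b) (ha : π a < π i) (hb : π b < π i) :
      False := by
    rcases lt_or_gt_of_ne (π.injective.ne hab.ne) with h | h
    · exact h312 (permContains_p312 hia hab h hb)
    · exact h321 (permContains_p321 hia hab h ha)
  refine card_le_one.mpr fun a ha b hb => ?_
  simp only [mem_filter, mem_univ, true_and] at ha hb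
  rcases lt_trichotomy a b with h | h | h
  · exact (two_below a b ha.1 h ha.2 hb.2).elim
  · exact h
  · exact (two_below b a hb.1 h hb.2 ha.2).elim

theorem card_filter_lt_and_lt_apply_le_one (h231 : PermAvoids π p231)
    (h321 : PermAvoids π p321) (i : Fin n) : #{k | k < i ∧ π i < π k} ≤ 1 := by
  have two_above (a b : Fin n) (hab : a < b) (hbi : b < i) (ha : π i < π a) (hb : π i < π b) :
      False := by
    rcases lt_or_gt_of_ne (π.injective.ne hab.ne) with h | h
    · exact h231 (permContains_p231 hab hbi ha h)
    · exact h321 (permContains_p321 hab hbi hb h)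
  refine card_le_one.mpr fun a ha b hb => ?_
  simp only [mem_filter, mem_univ, true_and] at ha hb
  rcases lt_trichotomy a b with h | h | h
  · exact (two_above a b h hb.1 ha.2 hb.2).elim
  · exact h
  · exact (two_above b a h ha.1 hb.2 ha.2).elim

theorem apply_le_add_one_of_avoids (h312 : PermAvoids π p312) (h321 : PermAvoids π p321)
    (i : Fin n) : (π i : ℕ) ≤ i + 1 := by
  have hsub : ({k | π k < π i} : Finset (Fin n)) ⊆
      Iio i ∪ ({k | i < k ∧ π k < π i} : Finset (Fin n)) := by
    intro k hk
    simp only [mem_filter, mem_univ, true_and, mem_union, mem_Iio] at hk ⊢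
    rcases lt_trichotomy k i with h | rfl | h
    · exact .inl h
    · exact absurd hk (lt_irrefl _)
    · exact .inr ⟨h, hk⟩
  calc (π i : ℕ) = #{k | π k < π i} := (card_filter_apply_lt π (π i)).symm
    _ ≤ #(Iio i) + #{k | i < k ∧ π k < π i} := (card_le_card hsub).trans (card_union_le _ _)
    _ ≤ i + 1 := by
      rw [Fin.card_Iio]
      exact Nat.add_le_add_left (card_filter_lt_and_apply_lt_le_one h312 h321 i) _

theorem le_apply_add_one_of_avoids (h231 : PermAvoids π p231) (h321 : PermAvoids π p321)
    (i : Fin n) : (i : ℕ) ≤ π i + 1 := by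
  have hsub : Iio i ⊆
      ({k | π k < π i} : Finset (Fin n)) ∪ ({k | k < i ∧ π i < π k} : Finset (Fin n)) := by
    intro k hk
    simp only [mem_filter, mem_univ, true_and, mem_union, mem_Iio] at hk ⊢
    rcases lt_trichotomy (π k) (π i) with h | h | h
    · exact .inl h
    · exact absurd (π.injective h) hk.ne
    · exact .inr ⟨hk, h⟩
  calc (i : ℕ) = #(Iio i) := (Fin.card_Iio i).symm
    _ ≤ #{k | π k < π i} + #{k | k < i ∧ π i < π k} :=
      (card_le_card hsub).trans (card_union_le _ _)
    _ ≤ π i + 1 := by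
      rw [card_filter_apply_lt]
      exact Nat.add_le_add_left (card_filter_lt_and_lt_apply_le_one h231 h321 i) _

end Patterns

def MovesAtMostOne {n : ℕ} (π : Equiv.Perm (Fin n)) : Prop :=
  ∀ i, (π i : ℕ) ≤ i + 1 ∧ (i : ℕ) ≤ π i + 1

namespace MovesAtMostOne

variable {n : ℕ} {π : Equiv.Perm (Fin n)}

theorem permAvoids (h : MovesAtMostOne π) {σ : Equiv.Perm (Fin 3)} (hσ : σ 2 < σ 0) :
    PermAvoids π σ := by
  rintro ⟨f, hf, hfσ⟩
  have h01 := hf 0 1 (by decide)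
  have h12 := hf 1 2 (by decide)
  have h20 := (hfσ 2 0).1 hσ
  -- `f 0 + 2 ≤ f 2 ≤ π (f 2) + 1 ≤ π (f 0) ≤ f 0 + 1`
  have := (h (f 0)).1
  have := (h (f 2)).2
  simp only [Fin.lt_def] at h01 h12 h20
  omega

theorem inv (h : MovesAtMostOne π) : MovesAtMostOne π⁻¹ := fun i => by
  simpa [and_comm] using h (π⁻¹ i)

theorem apply_eq_add_one_of_lt (h : MovesAtMostOne π) {i : Fin n} (hi : i < π i) :
    (π i : ℕ) = i + 1 := by
  have := h i
  rw [Fin.lt_def] at hi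
  omega

theorem apply_apply_of_apply_eq_add_one (h : MovesAtMostOne π) {i : Fin n}
    (hi : (π i : ℕ) = i + 1) : π (π i) = i := by
  by_contra hne
  have hval : (π (π i) : ℕ) = i + 2 := by
    have hne' : (π (π i) : ℕ) ≠ i := fun e => hne (Fin.ext e)
    have hne'' : (π (π i) : ℕ) ≠ π i := fun e => by
      have := π.injective (Fin.ext e)
      rw [this] at hi
      omega
    have := h (π i)
    omega
  -- Then the `i + 1` values below `i + 1` would all sit at the `i` positions below `i`.
  have hsub : ({k | π k < π i} : Finset (Fin n)) ⊆ Iio i := by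
    intro k hk
    simp only [mem_filter, mem_univ, true_and, mem_Iio, Fin.lt_def, hi] at hk ⊢
    have hk_ne_succ : (k : ℕ) ≠ i + 1 := fun e => by
      rw [show k = π i from Fin.ext (e.trans hi.symm)] at hk
      omega
    have hk_ne : k ≠ i := by
      rintro rfl
      omega
    have := (h k).2
    have := Fin.val_ne_of_ne hk_ne
    omega
  have := card_le_card hsub
  rw [card_filter_apply_lt, Fin.card_Iio] at this
  omega

theorem involutive (h : MovesAtMostOne π) : Function.Involutive π := by
  intro i
  rcases Nat.lt_trichotomy (π i) i with hlt | heq | hgt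
  · -- the excedance case for `π⁻¹` at `π i`
    have hinv : π⁻¹ (π i) = i := π.symm_apply_apply i
    have := h.inv.apply_apply_of_apply_eq_add_one (i := π i) (by rw [hinv]; have := h i; omega)
    rw [hinv] at this
    rw [← this]
    exact π.apply_symm_apply i
  · rw [Fin.ext heq, Fin.ext heq]
  · exact h.apply_apply_of_apply_eq_add_one (by have := h i; omega)

theorem fpCount_add_two_mul_excCount (h : MovesAtMostOne π) :
    fpCount π + 2 * excCount π = n := by
  classical
  -- Sum `[π i = i] + 2 [i < π i] = 1 + (π i - i)` over `i`; the displacements sum to zero.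
  have hpt (i : Fin n) : ((if π i = i then 1 else 0) + 2 * (if i < π i then 1 else 0) : ℤ) =
      1 + ((π i : ℕ) - (i : ℕ) : ℤ) := by
    have := h i
    split_ifs with h₁ h₂ h₂ <;> simp only [Fin.ext_iff, Fin.lt_def] at h₁ h₂ <;> omega
  have hsum := sum_congr rfl fun i (_ : i ∈ univ) => hpt i
  rw [sum_add_distrib, ← mul_sum, sum_add_distrib, sum_sub_distrib,
    Equiv.sum_comp π fun i => ((i : ℕ) : ℤ), sum_boole, sum_boole] at hsum
  rw [fpCount, excCount, Nat.card_eq_fintype_card, Nat.card_eq_fintype_card,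
    Fintype.card_subtype, Fintype.card_subtype]
  simp only [sum_const, card_univ, Fintype.card_fin, Int.nsmul_eq_mul, mul_one, sub_self,
    add_zero] at hsum
  omega

end MovesAtMostOne

theorem avoids_iff_movesAtMostOne {n : ℕ} {π : Equiv.Perm (Fin n)} :
    (∀ σ ∈ ({p231, p312, p321} : Set (Equiv.Perm (Fin 3))), PermAvoids π σ) ↔
      MovesAtMostOne π := by
  simp only [Set.mem_insert_iff, Set.mem_singleton_iff, forall_eq_or_imp, forall_eq]
  exact ⟨fun ⟨h231, h312, h321⟩ i =>
      ⟨apply_le_add_one_of_avoids h312 h321 i, le_apply_add_one_of_avoids h231 h321 i⟩,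
    fun h => ⟨h.permAvoids (by decide), h.permAvoids (by decide), h.permAvoids (by decide)⟩⟩

def IsSparse (n : ℕ) (s : Finset ℕ) : Prop :=
  ∀ a ∈ s, a + 1 < n ∧ a + 1 ∉ s

instance (n : ℕ) : DecidablePred (IsSparse n) := fun _ => by
  unfold IsSparse
  infer_instance

def sparseSets (n j : ℕ) : Finset (Finset ℕ) :=
  ((range n).powersetCard j).filter (IsSparse n)

section sparseSets

variable {n j : ℕ}

theorem mem_sparseSets {s : Finset ℕ} : s ∈ sparseSets n j ↔ IsSparse n s ∧ #s = j := by
  simp only [sparseSets, mem_filter, mem_powersetCard]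
  exact ⟨fun ⟨⟨_, hc⟩, hs⟩ => ⟨hs, hc⟩,
    fun ⟨hs, hc⟩ => ⟨⟨fun a ha => mem_range.mpr (by have := (hs a ha).1; omega), hc⟩, hs⟩⟩

theorem sparseSets_zero (n : ℕ) : sparseSets n 0 = {∅} := by
  ext s
  simp +contextual [mem_sparseSets, IsSparse]

theorem filter_notMem_sparseSets_add_two :
    (sparseSets (n + 2) j).filter (n ∉ ·) = sparseSets (n + 1) j := by
  ext s
  simp only [mem_filter, mem_sparseSets, IsSparse]
  constructor
  · rintro ⟨⟨hs, hc⟩, hn⟩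
    refine ⟨fun a ha => ⟨?_, (hs a ha).2⟩, hc⟩
    have := (hs a ha).1
    have : a ≠ n := fun e => hn (e ▸ ha)
    omega
  · rintro ⟨hs, hc⟩
    exact ⟨⟨fun a ha => ⟨by have := (hs a ha).1; omega, (hs a ha).2⟩, hc⟩,
      fun hn => by have := (hs n hn).1; omega⟩

theorem card_filter_mem_sparseSets_add_two :
    #((sparseSets (n + 2) (j + 1)).filter (n ∈ ·)) = #(sparseSets n j) := by
  refine card_nbij' (·.erase n) (insert n) ?_ ?_ (fun s hs => ?_) (fun t ht => ?_)
  · intro s hs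
    simp only [coe_filter, mem_sparseSets, IsSparse, Set.mem_ofPred_eq, mem_coe] at hs ⊢
    obtain ⟨⟨hs, hc⟩, hn⟩ := hs
    refine ⟨fun a ha => ?_, by rw [card_erase_of_mem hn, hc]; rfl⟩
    rw [mem_erase] at ha ⊢
    have := (hs a ha.2).1
    have : a + 1 ≠ n := fun e => (hs a ha.2).2 (e ▸ hn)
    exact ⟨by omega, fun h => (hs a ha.2).2 h.2⟩
  · intro t ht
    simp only [coe_filter, mem_sparseSets, IsSparse, Set.mem_ofPred_eq, mem_coe] at ht ⊢
    obtain ⟨ht, hc⟩ := ht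
    have hn : n ∉ t := fun h => by have := (ht n h).1; omega
    refine ⟨⟨fun a ha => ?_, by rw [card_insert_of_notMem hn, hc]⟩, mem_insert_self n t⟩
    rw [mem_insert] at ha ⊢
    rcases ha with rfl | ha
    · exact ⟨by omega, fun h => h.elim (by omega) fun h => by have := (ht _ h).1; omega⟩
    · have := (ht a ha).1
      exact ⟨by omega, fun h => h.elim (by omega) (ht a ha).2⟩
  · exact insert_erase (mem_filter.mp hs).2
  · exact erase_insert fun h => by
      have := ((mem_sparseSets.mp ht).1 n h).1
      omega

theorem card_sparseSets_add_two (n j : ℕ) :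
    #(sparseSets (n + 2) (j + 1)) = #(sparseSets (n + 1) (j + 1)) + #(sparseSets n j) := by
  rw [← card_filter_add_card_filter_not (s := sparseSets (n + 2) (j + 1)) (n ∈ ·),
    filter_notMem_sparseSets_add_two, card_filter_mem_sparseSets_add_two, add_comm]

end sparseSets

def adjSwaps (s : Finset ℕ) (a : ℕ) : ℕ :=
  if a ∈ s then a + 1 else if 0 < a ∧ a - 1 ∈ s then a - 1 else a

section adjSwaps

variable {n : ℕ} {s : Finset ℕ}

theorem adjSwaps_le (s : Finset ℕ) (a : ℕ) : adjSwaps s a ≤ a + 1 ∧ a ≤ adjSwaps s a + 1 := by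
  unfold adjSwaps
  split_ifs <;> omega

theorem lt_adjSwaps_iff {a : ℕ} : a < adjSwaps s a ↔ a ∈ s := by
  unfold adjSwaps
  split_ifs <;> simp_all

theorem adjSwaps_lt (hs : IsSparse n s) {a : ℕ} (ha : a < n) : adjSwaps s a < n := by
  unfold adjSwaps
  split_ifs with h
  · exact (hs a h).1
  all_goals omega

theorem adjSwaps_adjSwaps (hs : IsSparse n s) (a : ℕ) : adjSwaps s (adjSwaps s a) = a := by
  by_cases ha : a ∈ s
  · simp [adjSwaps, ha, (hs a ha).2]
  by_cases hb : 0 < a ∧ a - 1 ∈ s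
  · simp [adjSwaps, ha, hb, Nat.sub_add_cancel hb.1]
  · simp [adjSwaps, ha, hb]

def sparsePerm (hs : IsSparse n s) : Equiv.Perm (Fin n) :=
  Function.Involutive.toPerm (fun i => ⟨adjSwaps s i, adjSwaps_lt hs i.2⟩)
    fun i => Fin.ext (adjSwaps_adjSwaps hs i)

@[simp]
theorem sparsePerm_apply_val (hs : IsSparse n s) (i : Fin n) :
    (sparsePerm hs i : ℕ) = adjSwaps s i :=
  rfl

theorem movesAtMostOne_sparsePerm (hs : IsSparse n s) : MovesAtMostOne (sparsePerm hs) :=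
  fun i => by simpa using adjSwaps_le s i

end adjSwaps

def excSet {n : ℕ} (π : Equiv.Perm (Fin n)) : Finset ℕ :=
  ({i | i < π i} : Finset (Fin n)).map Fin.valEmbedding

section excSet

variable {n : ℕ} {π : Equiv.Perm (Fin n)}

theorem mem_excSet {a : ℕ} : a ∈ excSet π ↔ ∃ i : Fin n, i < π i ∧ (i : ℕ) = a := by
  simp [excSet]

theorem val_mem_excSet {i : Fin n} : (i : ℕ) ∈ excSet π ↔ i < π i :=
  mem_excSet.trans ⟨fun ⟨_, hj, e⟩ => Fin.ext e ▸ hj, fun hi => ⟨i, hi, rfl⟩⟩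

theorem card_excSet (π : Equiv.Perm (Fin n)) : #(excSet π) = excCount π := by
  rw [excSet, card_map, excCount, Nat.card_eq_fintype_card, Fintype.card_subtype]

theorem excSet_sparsePerm {s : Finset ℕ} (hs : IsSparse n s) : excSet (sparsePerm hs) = s := by
  ext a
  rw [mem_excSet]
  constructor
  · rintro ⟨i, hi, rfl⟩
    exact lt_adjSwaps_iff.mp (by simpa [Fin.lt_def] using hi)
  · intro ha
    exact ⟨⟨a, by have := (hs a ha).1; omega⟩,
      by simpa [Fin.lt_def] using lt_adjSwaps_iff.mpr ha, rfl⟩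

theorem MovesAtMostOne.isSparse_excSet (h : MovesAtMostOne π) : IsSparse n (excSet π) := by
  intro a ha
  obtain ⟨i, hi, rfl⟩ := mem_excSet.mp ha
  have hval := h.apply_eq_add_one_of_lt hi
  refine ⟨hval ▸ (π i).2, fun hsucc => ?_⟩
  obtain ⟨j, hj, hji⟩ := mem_excSet.mp hsucc
  rw [show j = π i from Fin.ext (hji.trans hval.symm), h.involutive i] at hj
  exact lt_asymm hi hj

theorem MovesAtMostOne.apply_eq_adjSwaps (h : MovesAtMostOne π) (i : Fin n) :
    (π i : ℕ) = adjSwaps (excSet π) i := by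
  unfold adjSwaps
  split_ifs with hexc hpred
  · exact h.apply_eq_add_one_of_lt (val_mem_excSet.mp hexc)
  · obtain ⟨j, hj, hji⟩ := mem_excSet.mp hpred.2
    have hπj : π j = i := Fin.ext (by have := h.apply_eq_add_one_of_lt hj; omega)
    rw [← hji, ← hπj, h.involutive j]
  · rw [val_mem_excSet, not_lt] at hexc
    by_contra hne
    have hlt : π i < π (π i) := by
      rw [h.involutive i]
      exact lt_of_le_of_ne hexc fun e => hne (congrArg Fin.val e)
    have hval := h.apply_eq_add_one_of_lt hlt
    rw [h.involutive i] at hval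
    exact hpred ⟨by omega, (show (π i : ℕ) = i - 1 by omega) ▸ val_mem_excSet.mpr hlt⟩

end excSet

theorem IsSparse.two_mul_card_le {n : ℕ} {s : Finset ℕ} (hs : IsSparse n s) : 2 * #s ≤ n := by
  have := (movesAtMostOne_sparsePerm hs).fpCount_add_two_mul_excCount
  rw [← card_excSet, excSet_sparsePerm] at this
  omega

theorem sparseSets_eq_empty {n j : ℕ} (h : n < 2 * j) : sparseSets n j = ∅ :=
  eq_empty_of_forall_notMem fun s hs => by
    have := (mem_sparseSets.mp hs).1.two_mul_card_le
    rw [(mem_sparseSets.mp hs).2] at this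
    omega

theorem card_sparseSets (i j : ℕ) : #(sparseSets (i + 2 * j) j) = (i + j).choose j := by
  induction j generalizing i with
  | zero => simp [sparseSets_zero]
  | succ j ihj =>
    induction i with
    | zero =>
      rw [show 0 + 2 * (j + 1) = 2 * j + 2 by ring, card_sparseSets_add_two,
        sparseSets_eq_empty (by omega), card_empty, zero_add, ← zero_add (2 * j), ihj]
      simp
    | succ i ihi =>
      rw [show i + 1 + 2 * (j + 1) = i + 1 + 2 * j + 2 by ring, card_sparseSets_add_two,
        show i + 1 + 2 * j + 1 = i + 2 * (j + 1) by ring, ihi, ihj,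
        show i + 1 + (j + 1) = (i + j + 1) + 1 by ring, Nat.choose_succ_succ', add_comm]
      ring_nf

def movesAtMostOneEquiv (n j : ℕ) :
    {π : Equiv.Perm (Fin n) // MovesAtMostOne π ∧ excCount π = j} ≃ sparseSets n j where
  toFun π := ⟨excSet π.1,
    mem_sparseSets.mpr ⟨π.2.1.isSparse_excSet, (card_excSet _).trans π.2.2⟩⟩
  invFun s := ⟨sparsePerm (mem_sparseSets.mp s.2).1,
    movesAtMostOne_sparsePerm _, by
      rw [← card_excSet, excSet_sparsePerm]
      exact (mem_sparseSets.mp s.2).2⟩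
  left_inv π := Subtype.ext (Equiv.ext fun i => Fin.ext (π.2.1.apply_eq_adjSwaps i).symm)
  right_inv s := Subtype.ext (excSet_sparsePerm (mem_sparseSets.mp s.2).1)

theorem card_avoiders (i j n : ℕ) :
    Nat.card {π : Equiv.Perm (Fin n) //
      (∀ σ ∈ ({p231, p312, p321} : Set (Equiv.Perm (Fin 3))), PermAvoids π σ) ∧
        fpCount π = i ∧ excCount π = j} =
      if i + 2 * j = n then (i + j).choose j else 0 := by
  rw [Nat.card_congr (Equiv.subtypeEquivRight fun π => and_congr_left' avoids_iff_movesAtMostOne)]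
  split_ifs with hn
  · rw [← card_sparseSets, hn, ← Nat.card_eq_finsetCard,
      ← Nat.card_congr (movesAtMostOneEquiv n j)]
    refine Nat.card_congr (Equiv.subtypeEquivRight fun π => ?_)
    exact ⟨fun ⟨h, _, he⟩ => ⟨h, he⟩,
      fun ⟨h, he⟩ => ⟨h, by have := h.fpCount_add_two_mul_excCount; omega, he⟩⟩
  · rw [Nat.card_eq_zero]
    refine .inl ⟨fun ⟨π, h, hf, he⟩ => hn ?_⟩
    have := h.fpCount_add_two_mul_excCount
    omega

-- The series `Σ_{i,j} h i j (xz)^i (qz²)^j`.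
def seriesXZQZ2 (h : ℕ → ℕ → ℤ) : MvPowerSeries (Fin 3) ℤ :=
  fun d => if d 0 + 2 * d 1 = d 2 then h (d 0) (d 1) else 0

section seriesXZQZ2

theorem coeff_seriesXZQZ2 (h : ℕ → ℕ → ℤ) (d : Fin 3 →₀ ℕ) :
    coeff d (seriesXZQZ2 h) = if d 0 + 2 * d 1 = d 2 then h (d 0) (d 1) else 0 :=
  rfl

theorem seriesXZQZ2_sub (g h : ℕ → ℕ → ℤ) :
    seriesXZQZ2 g - seriesXZQZ2 h = seriesXZQZ2 (g - h) := by
  ext d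
  simp only [map_sub, coeff_seriesXZQZ2, Pi.sub_apply]
  split_ifs <;> simp

theorem seriesXZQZ2_single_zero :
    seriesXZQZ2 (fun i j => if i = 0 ∧ j = 0 then 1 else 0) = 1 := by
  ext d
  rw [coeff_seriesXZQZ2, coeff_one]
  have : d = 0 ↔ d 0 = 0 ∧ d 1 = 0 ∧ d 2 = 0 := by
    simp [Finsupp.ext_iff, Fin.forall_fin_succ]
  split_ifs <;> simp_all

theorem vx_mul_vz_mul_seriesXZQZ2 (h : ℕ → ℕ → ℤ) :
    vx * vz * seriesXZQZ2 h = seriesXZQZ2 fun i j => if 1 ≤ i then h (i - 1) j else 0 := by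
  ext d
  rw [vx, vz, X, X, monomial_mul_monomial, coeff_monomial_mul, coeff_seriesXZQZ2,
    coeff_seriesXZQZ2]
  simp only [Finsupp.le_def, Fin.forall_fin_succ, IsEmpty.forall_iff, Finsupp.coe_add,
    Finsupp.coe_tsub, Pi.add_apply, Pi.sub_apply, Finsupp.single_apply, Fin.succ_zero_eq_one,
    Fin.succ_one_eq_two, Fin.reduceEq, ↓reduceIte, add_zero, zero_add, tsub_zero, and_true,
    one_mul]
  split_ifs <;> first | rfl | omega

theorem vq_mul_vz_sq_mul_seriesXZQZ2 (h : ℕ → ℕ → ℤ) :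
    vq * vz ^ 2 * seriesXZQZ2 h = seriesXZQZ2 fun i j => if 1 ≤ j then h i (j - 1) else 0 := by
  ext d
  rw [vq, vz, X, X_pow_eq, monomial_mul_monomial, coeff_monomial_mul, coeff_seriesXZQZ2,
    coeff_seriesXZQZ2]
  simp only [Finsupp.le_def, Fin.forall_fin_succ, IsEmpty.forall_iff, Finsupp.coe_add,
    Finsupp.coe_tsub, Pi.add_apply, Pi.sub_apply, Finsupp.single_apply, Fin.succ_zero_eq_one,
    Fin.succ_one_eq_two, Fin.reduceEq, ↓reduceIte, add_zero, zero_add, tsub_zero, and_true,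
    one_mul]
  split_ifs <;> first | rfl | omega

end seriesXZQZ2

theorem choose_sub_choose_sub_choose (i j : ℕ) :
    ((i + j).choose j : ℤ) - (if 1 ≤ i then ((i - 1 + j).choose j : ℤ) else 0)
      - (if 1 ≤ j then ((i + (j - 1)).choose (j - 1) : ℤ) else 0)
      = if i = 0 ∧ j = 0 then 1 else 0 := by
  rcases i with _ | i <;> rcases j with _ | j
  · simp
  · simp
  · simp
  · rw [if_pos (by omega), if_pos (by omega), if_neg (by omega),
      show i + 1 + (j + 1) = (i + 1 + j) + 1 by ring, Nat.choose_succ_succ',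
      show i + 1 - 1 + (j + 1) = i + 1 + j by omega, show j + 1 - 1 = j by omega]
    push_cast
    ring

theorem patternGF_eq_seriesXZQZ2 :
    patternGF {p231, p312, p321} = seriesXZQZ2 fun i j => ((i + j).choose j : ℤ) := by
  ext d
  rw [coeff_seriesXZQZ2]
  exact (congrArg Nat.cast (card_avoiders (d 0) (d 1) (d 2))).trans (Nat.cast_ite _ _ _)

/-- (1 − xz − qz²)·F_{{231,312,321}}(x,q,z) = 1, i.e. F_{{231,312,321}} = 1/(1 − xz − qz²). -/
theorem F231_312_321_identity :
    (1 - vx * vz - vq * vz ^ 2) * patternGF {p231, p312, p321} = 1 := by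
  rw [patternGF_eq_seriesXZQZ2, sub_mul, sub_mul, one_mul, vx_mul_vz_mul_seriesXZQZ2,
    vq_mul_vz_sq_mul_seriesXZQZ2, seriesXZQZ2_sub, seriesXZQZ2_sub, ← seriesXZQZ2_single_zero]
  congr
  funext i j
  exact choose_sub_choose_sub_choose i j
end
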